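/- For positive reals x, y with x ≠ y, the full quadratic symbol satisfies: (ξ·η − xy)/((e^x+e^{−x})(e^y+e^{−y})) · ((x+y−1)e^{x+y} + (x+y+1)e^{−x−y})/(x+y) − (ξ·η + xy)/((e^x+e^{−x})(e^y+e^{−y})) · ((y−x−1)e^{y−x} − (x−y−1)e^{x−y})/(x−y) + (ξ·η)/((e^x+e^{−x})(e^y+e^{−y})) · [(e^{x+y}−e^{−x−y})/(x+y) + (e^{x−y}−e^{y−x})/(x−y)] − (xy)/((e^x+e^{−x})(e^y+e^{−y})) · [(e^{x+y}−e^{−x−y})/(x+y) − (e^{x−y}−e^{y−x})/(x−y)] = ξ·η − xy tanh(x) tanh(y), where x = |ξ|, y = |η| and ξ·η denotes the inner product of ξ, η ∈ ℝ². -/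
import Mathlib


open Real
open scoped RealInnerProductSpace

theorem full_quadratic_symbol_identity (ξ η : EuclideanSpace ℝ (Fin 2)) (x y : ℝ)
    (hx : x = ‖ξ‖) (hy : y = ‖η‖) (hx0 : 0 < x) (hy0 : 0 < y) (hxy : x ≠ y) :
    ((⟪ξ, η⟫ - x * y) / ((Real.exp x + Real.exp (-x)) * (Real.exp y + Real.exp (-y)))) *
        (((x + y - 1) * Real.exp (x + y) + (x + y + 1) * Real.exp (-x - y)) / (x + y))
      - ((⟪ξ, η⟫ + x * y) / ((Real.exp x + Real.exp (-x)) * (Real.exp y + Real.exp (-y)))) *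
        (((y - x - 1) * Real.exp (y - x) - (x - y - 1) * Real.exp (x - y)) / (x - y))
      + (⟪ξ, η⟫ / ((Real.exp x + Real.exp (-x)) * (Real.exp y + Real.exp (-y)))) *
        ((Real.exp (x + y) - Real.exp (-x - y)) / (x + y)
          + (Real.exp (x - y) - Real.exp (y - x)) / (x - y))
      - (x * y / ((Real.exp x + Real.exp (-x)) * (Real.exp y + Real.exp (-y)))) *
        ((Real.exp (x + y) - Real.exp (-x - y)) / (x + y)
          - (Real.exp (x - y) - Real.exp (y - x)) / (x - y))
      = ⟪ξ, η⟫ - x * y * Real.tanh x * Real.tanh y := by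
  have ha : Real.exp x ≠ 0 := (Real.exp_pos x).ne'
  have hb : Real.exp y ≠ 0 := (Real.exp_pos y).ne'
  have hab : x + y ≠ 0 := by positivity
  have hsub : x - y ≠ 0 := sub_ne_zero.mpr hxy
  have hca : Real.exp x + Real.exp (-x) ≠ 0 := by positivity
  have hcb : Real.exp y + Real.exp (-y) ≠ 0 := by positivity
  rw [Real.tanh_eq_sinh_div_cosh, Real.tanh_eq_sinh_div_cosh, Real.sinh_eq, Real.sinh_eq,
    Real.cosh_eq, Real.cosh_eq]
  have e1 : Real.exp (x + y) = Real.exp x * Real.exp y := Real.exp_add x y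
  have e2 : Real.exp (-x - y) = (Real.exp x * Real.exp y)⁻¹ := by
    rw [← Real.exp_add]; rw [← Real.exp_neg]; ring_nf
  have e3 : Real.exp (x - y) = Real.exp x / Real.exp y := Real.exp_sub x y
  have e4 : Real.exp (y - x) = Real.exp y / Real.exp x := Real.exp_sub y x
  have e5 : Real.exp (-x) = (Real.exp x)⁻¹ := Real.exp_neg x
  have e6 : Real.exp (-y) = (Real.exp y)⁻¹ := Real.exp_neg y
  rw [e1, e2, e3, e4, e5, e6]
  have hca' : Real.exp x + (Real.exp x)⁻¹ ≠ 0 := by positivity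
  have hcb' : Real.exp y + (Real.exp y)⁻¹ ≠ 0 := by positivity
  field_simp
  ring
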